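/- Let ψ := -(1-λ)∂₀ A₀ + ∂_i A^i where A solves the system (Box_m - μ²n^{-2}(1-λ))A₀ = 0, (Box_γ - μ²)A_i = (1-λ-n²)∂_i φ, Box_m φ = μ²n^{-2}(1-λ)φ with φ ≡ ∂₀ A₀. Then ψ satisfies the homogeneous Klein–Gordon equation Box_γ ψ = μ² ψ. -/

import Mathlib

noncomputable section

/-- Partial derivative `∂_i f`. -/
def pd (i : Fin 4) (f : (Fin 4 → ℝ) → ℝ) : (Fin 4 → ℝ) → ℝ :=
  fun x => fderiv ℝ f x (Pi.single i 1)

/-- `Box_γ = -n²∂₀² + Δ`. -/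
def BoxGam (n : ℝ) (f : (Fin 4 → ℝ) → ℝ) : (Fin 4 → ℝ) → ℝ :=
  fun x => -n ^ 2 * pd 0 (pd 0 f) x + ∑ i : Fin 3, pd i.succ (pd i.succ f) x

/-- `Box_m = (λ-1)∂₀² + Δ`. -/
def BoxM (lam : ℝ) (f : (Fin 4 → ℝ) → ℝ) : (Fin 4 → ℝ) → ℝ :=
  fun x => (lam - 1) * pd 0 (pd 0 f) x + ∑ i : Fin 3, pd i.succ (pd i.succ f) x

lemma fin_e1 : (0 : Fin 3).succ = (1 : Fin 4) := rfl
lemma fin_e2 : (1 : Fin 3).succ = (2 : Fin 4) := rfl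
lemma fin_e3 : (2 : Fin 3).succ = (3 : Fin 4) := rfl

lemma contDiff_pd {f : (Fin 4 → ℝ) → ℝ} (hf : ContDiff ℝ (⊤ : ℕ∞) f) (i : Fin 4) :
    ContDiff ℝ (⊤ : ℕ∞) (pd i f) :=
  (hf.fderiv_right (m := (⊤ : ℕ∞)) le_rfl).clm_apply contDiff_const

lemma pd_snd {f : (Fin 4 → ℝ) → ℝ} (hf : ContDiff ℝ (⊤ : ℕ∞) f) (i j : Fin 4) (x) :
    pd i (pd j f) x = fderiv ℝ (fderiv ℝ f) x (Pi.single i 1) (Pi.single j 1) := by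
  have hd : DifferentiableAt ℝ (fderiv ℝ f) x :=
    ((hf.fderiv_right (m := (⊤ : ℕ∞)) le_rfl).differentiable (by simp)) x
  show fderiv ℝ (fun y => (fderiv ℝ f y) (Pi.single j 1)) x (Pi.single i 1) = _
  rw [fderiv_clm_apply hd (differentiableAt_const _)]
  simp

lemma pd_comm {f : (Fin 4 → ℝ) → ℝ} (hf : ContDiff ℝ (⊤ : ℕ∞) f) (i j : Fin 4) (x) :
    pd i (pd j f) x = pd j (pd i f) x := by
  rw [pd_snd hf, pd_snd hf]
  exact (hf.contDiffAt.isSymmSndFDerivAt (by norm_num; exact WithTop.coe_le_coe.mpr le_top)) _ _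

lemma pd3 {f : (Fin 4 → ℝ) → ℝ} (hf : ContDiff ℝ (⊤ : ℕ∞) f) (j a : Fin 4) (x) :
    pd j (pd a (pd a f)) x = pd a (pd a (pd j f)) x := by
  have h1 : pd j (pd a f) = pd a (pd j f) := funext (pd_comm hf j a)
  rw [pd_comm (contDiff_pd hf a) j a x, h1]

lemma pd_comb (c : ℝ) {f g h k : (Fin 4 → ℝ) → ℝ} (hf : ContDiff ℝ (⊤ : ℕ∞) f)
    (hg : ContDiff ℝ (⊤ : ℕ∞) g) (hh : ContDiff ℝ (⊤ : ℕ∞) h) (hk : ContDiff ℝ (⊤ : ℕ∞) k) (i : Fin 4) :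
    pd i (fun y => c * f y + (g y + h y + k y))
      = fun x => c * pd i f x + (pd i g x + pd i h x + pd i k x) := by
  funext x
  have Hf := ((hf.differentiable (by simp)) x).hasFDerivAt
  have Hg := ((hg.differentiable (by simp)) x).hasFDerivAt
  have Hh := ((hh.differentiable (by simp)) x).hasFDerivAt
  have Hk := ((hk.differentiable (by simp)) x).hasFDerivAt
  have H := (Hf.const_mul c).add ((Hg.add Hh).add Hk)
  have hfd : fderiv ℝ (fun y => c * f y + (g y + h y + k y)) x
      = c • fderiv ℝ f x + ((fderiv ℝ g x + fderiv ℝ h x) + fderiv ℝ k x) := H.fderiv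
  simp only [pd, hfd]
  simp

lemma pd_comb2 (c d : ℝ) {f g : (Fin 4 → ℝ) → ℝ} (hf : ContDiff ℝ (⊤ : ℕ∞) f)
    (hg : ContDiff ℝ (⊤ : ℕ∞) g) (i : Fin 4) :
    pd i (fun y => c * f y + d * g y)
      = fun x => c * pd i f x + d * pd i g x := by
  funext x
  have Hf := ((hf.differentiable (by simp)) x).hasFDerivAt
  have Hg := ((hg.differentiable (by simp)) x).hasFDerivAt
  have H := (Hf.const_mul c).add (Hg.const_mul d)
  have hfd : fderiv ℝ (fun y => c * f y + d * g y) x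
      = c • fderiv ℝ f x + d • fderiv ℝ g x := H.fderiv
  simp only [pd, hfd]
  simp

lemma boxgam_comb {f g h k : (Fin 4 → ℝ) → ℝ} (hf : ContDiff ℝ (⊤ : ℕ∞) f)
    (hg : ContDiff ℝ (⊤ : ℕ∞) g) (hh : ContDiff ℝ (⊤ : ℕ∞) h) (hk : ContDiff ℝ (⊤ : ℕ∞) k) (c n : ℝ) (x) :
    BoxGam n (fun y => c * f y + (g y + h y + k y)) x
      = c * BoxGam n f x + (BoxGam n g x + BoxGam n h x + BoxGam n k x) := by
  have w1 := pd_comb c hf hg hh hk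
  have w2 : ∀ i i' : Fin 4,
      pd i (fun x => c * pd i' f x + (pd i' g x + pd i' h x + pd i' k x))
        = fun x => c * pd i (pd i' f) x
            + (pd i (pd i' g) x + pd i (pd i' h) x + pd i (pd i' k) x) :=
    fun i i' => pd_comb c (contDiff_pd hf i') (contDiff_pd hg i')
      (contDiff_pd hh i') (contDiff_pd hk i') i
  simp only [BoxGam, Fin.sum_univ_three, fin_e1, fin_e2, fin_e3, w1, w2]
  ring

lemma key_step {f p : (Fin 4 → ℝ) → ℝ} (hf : ContDiff ℝ (⊤ : ℕ∞) f) (hp : ContDiff ℝ (⊤ : ℕ∞) p)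
    (c d n : ℝ) (j : Fin 4)
    (h : ∀ x, BoxGam n f x = c * f x + d * p x) (x) :
    BoxGam n (pd j f) x = c * pd j f x + d * pd j p x := by
  have hfun : (fun y => -n ^ 2 * pd 0 (pd 0 f) y
        + (pd 1 (pd 1 f) y + pd 2 (pd 2 f) y + pd 3 (pd 3 f) y))
      = (fun y => c * f y + d * p y) := by
    funext y
    have hy := h y
    simp only [BoxGam, Fin.sum_univ_three, fin_e1, fin_e2, fin_e3] at hy
    linear_combination hy
  have hD := congrArg (pd j) hfun
  rw [pd_comb (-n ^ 2) (contDiff_pd (contDiff_pd hf 0) 0) (contDiff_pd (contDiff_pd hf 1) 1)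
      (contDiff_pd (contDiff_pd hf 2) 2) (contDiff_pd (contDiff_pd hf 3) 3) j,
    pd_comb2 c d hf hp j] at hD
  have hDx := congrFun hD x
  simp only [BoxGam, Fin.sum_univ_three, fin_e1, fin_e2, fin_e3]
  rw [← pd3 hf j 0 x, ← pd3 hf j 1 x, ← pd3 hf j 2 x, ← pd3 hf j 3 x]
  linear_combination hDx

/-- the quantity `ψ = -(1-λ)∂₀A₀ + ∂_iA^i` satisfies
`Box_γ ψ = μ² ψ` whenever `A, φ` solve the evolution system with `φ ≡ ∂₀A₀`. -/
theorem psi_satisfies_klein_gordon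
    (lam μ n : ℝ) (hn : 0 < n)
    (A : (Fin 4 → ℝ) → Fin 4 → ℝ) (φ : (Fin 4 → ℝ) → ℝ)
    (hA : ∀ a : Fin 4, ContDiff ℝ (⊤ : ℕ∞) (fun x => A x a)) (hφ : ContDiff ℝ (⊤ : ℕ∞) φ)
    (hphi : ∀ x, φ x = pd 0 (fun y => A y 0) x)
    (heq0 : ∀ x, BoxM lam (fun y => A y 0) x
      - μ ^ 2 * (n ^ 2)⁻¹ * (1 - lam) * A x 0 = 0)
    (heqi : ∀ (i : Fin 3) (x), BoxGam n (fun y => A y i.succ) x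
      - μ ^ 2 * A x i.succ = (1 - lam - n ^ 2) * pd i.succ φ x)
    (heqφ : ∀ x, BoxM lam φ x = μ ^ 2 * (n ^ 2)⁻¹ * (1 - lam) * φ x) :
    ∀ x, BoxGam n
        (fun y => -(1 - lam) * pd 0 (fun z => A z 0) y
          + ∑ i : Fin 3, pd i.succ (fun z => A z i.succ) y) x
      = μ ^ 2 * (-(1 - lam) * pd 0 (fun z => A z 0) x
          + ∑ i : Fin 3, pd i.succ (fun z => A z i.succ) x) := by
  have hφf : φ = pd 0 (fun y => A y 0) := funext hphi
  subst hφf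
  intro x
  have c2 : ∀ (j a : Fin 4), ContDiff ℝ (⊤ : ℕ∞) (pd j (fun y => A y a)) :=
    fun j a => contDiff_pd (hA a) j
  have hn2 : n ^ 2 * (n ^ 2)⁻¹ = 1 := mul_inv_cancel₀ (by positivity)
  have hD1 : BoxGam n (pd 1 (fun y => A y 1)) x
      = μ ^ 2 * pd 1 (fun y => A y 1) x
        + (1 - lam - n ^ 2) * pd 1 (pd 1 (pd 0 (fun y => A y 0))) x :=
    key_step (hA 1) (contDiff_pd (c2 0 0) 1) (μ ^ 2) (1 - lam - n ^ 2) n 1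
      (fun y => by have := heqi 0 y; simp only [fin_e1] at this; linear_combination this) x
  have hD2 : BoxGam n (pd 2 (fun y => A y 2)) x
      = μ ^ 2 * pd 2 (fun y => A y 2) x
        + (1 - lam - n ^ 2) * pd 2 (pd 2 (pd 0 (fun y => A y 0))) x :=
    key_step (hA 2) (contDiff_pd (c2 0 0) 2) (μ ^ 2) (1 - lam - n ^ 2) n 2
      (fun y => by have := heqi 1 y; simp only [fin_e2] at this; linear_combination this) x
  have hD3 : BoxGam n (pd 3 (fun y => A y 3)) x
      = μ ^ 2 * pd 3 (fun y => A y 3) x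
        + (1 - lam - n ^ 2) * pd 3 (pd 3 (pd 0 (fun y => A y 0))) x :=
    key_step (hA 3) (contDiff_pd (c2 0 0) 3) (μ ^ 2) (1 - lam - n ^ 2) n 3
      (fun y => by have := heqi 2 y; simp only [fin_e3] at this; linear_combination this) x
  have E := heqφ x
  simp only [BoxM, Fin.sum_univ_three, fin_e1, fin_e2, fin_e3] at E
  simp only [Fin.sum_univ_three, fin_e1, fin_e2, fin_e3]
  rw [boxgam_comb (c2 0 0) (c2 1 1) (c2 2 2) (c2 3 3) (-(1 - lam)) n x]
  rw [hD1, hD2, hD3]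
  simp only [BoxGam, Fin.sum_univ_three, fin_e1, fin_e2, fin_e3]
  linear_combination (-(n ^ 2)) * E - μ ^ 2 * (1 - lam) * (pd 0 (fun y => A y 0) x) * hn2
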